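/- arXiv:1807.03009 — 3 statements merged into one kernel-verified Lean document; each statement's English description precedes it below -/
import Mathlib

section
/- Let R, c, ĉ be positive real numbers and let m ≥ 1 be a natural number with 2m − 1 ≥ 6Rc. Then for all real numbers x, a, f with |x| ≤ R, a ≥ 0 and a·c − f ≥ ĉ, one has −2m(x−2R)^(2m−1)·f − m(2m−1)(x−2R)^(2m−2)·a ≤ −2m·ĉ·R^(2m−1). -/
theorem polynomial_lyapunov_bound (R c cHat : ℝ) (hR : 0 < R) (hc : 0 < c) (hcHat : 0 < cHat)
    (m : ℕ) (hm : 1 ≤ m) (hmc : 6 * R * c ≤ 2 * (m : ℝ) - 1)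
    (x a f : ℝ) (hx : |x| ≤ R) (ha : 0 ≤ a) (haf : cHat ≤ a * c - f) :
    -(2 * (m : ℝ)) * (x - 2 * R) ^ (2 * m - 1) * f
      - (m : ℝ) * (2 * (m : ℝ) - 1) * (x - 2 * R) ^ (2 * m - 2) * a
    ≤ -(2 * (m : ℝ)) * cHat * R ^ (2 * m - 1) := by
  obtain ⟨hx1, hx2⟩ := abs_le.mp hx
  set y : ℝ := 2 * R - x with hy
  have hyR : R ≤ y := by simp [hy]; linarith
  have hy3 : y ≤ 3 * R := by simp [hy]; linarith
  have hy0 : 0 < y := lt_of_lt_of_le hR hyR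
  have hodd : Odd (2 * m - 1) := by
    refine ⟨m - 1, ?_⟩; omega
  have heven : Even (2 * m - 2) := by
    refine ⟨m - 1, ?_⟩; omega
  have hx2R : x - 2 * R = -y := by rw [hy]; ring
  rw [hx2R, hodd.neg_pow, heven.neg_pow]
  have hsucc : 2 * m - 1 = (2 * m - 2) + 1 := by omega
  have h3 : y ^ (2 * m - 1) = y * y ^ (2 * m - 2) := by
    rw [hsucc, pow_succ]; ring
  have h2 : (0:ℝ) ≤ y ^ (2 * m - 2) := pow_nonneg hy0.le _
  have h1 : R ^ (2 * m - 1) ≤ y ^ (2 * m - 1) := pow_le_pow_left₀ hR.le hyR _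
  have hm1 : (1:ℝ) ≤ (m:ℝ) := by exact_mod_cast hm
  have hQ0 : (0:ℝ) < y ^ (2 * m - 1) := pow_pos hy0 _
  -- step 1: bound f
  have hf : f ≤ a * c - cHat := by linarith
  have step1 : 2 * (m:ℝ) * (y ^ (2 * m - 1)) * f
      ≤ 2 * (m:ℝ) * (y ^ (2 * m - 1)) * (a * c - cHat) := by
    apply mul_le_mul_of_nonneg_left hf
    positivity
  -- step 2: a-term
  have h5 : 2 * y * c ≤ 2 * (m:ℝ) - 1 := by nlinarith
  have step2 : a * (y ^ (2 * m - 2)) * (2 * (m:ℝ) * (y * c) - (m:ℝ) * (2 * (m:ℝ) - 1)) ≤ 0 := by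
    apply mul_nonpos_of_nonneg_of_nonpos (mul_nonneg ha h2)
    nlinarith
  -- step 3: R-term
  have step3 : -(2 * (m:ℝ)) * cHat * (y ^ (2 * m - 1)) ≤ -(2 * (m:ℝ)) * cHat * R ^ (2 * m - 1) := by
    have : (0:ℝ) ≤ 2 * (m:ℝ) * cHat := by positivity
    nlinarith
  rw [h3] at step1 hQ0 h1 step3 ⊢
  nlinarith [step1, step2, step3]
end

section
/- Let R, ĉ be positive real numbers and let c be a real number with 0 < c ≤ 1/2; set α = √(2c). Then for all real numbers x, a, f with |x| ≤ R, a ≥ 0 and a·c + f ≥ ĉ, one has −α·e^(αx)·f − (α²/2)·e^(αx)·a ≤ −√(2c)·e^(−√(2c)·R)·ĉ. -/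
theorem exponential_lyapunov_bound (R cHat : ℝ) (hR : 0 < R) (hcHat : 0 < cHat)
    (c : ℝ) (hc : 0 < c) (hc' : c ≤ 1 / 2) (α : ℝ) (hα : α = Real.sqrt (2 * c))
    (x a f : ℝ) (hx : |x| ≤ R) (ha : 0 ≤ a) (haf : cHat ≤ a * c + f) :
    -α * Real.exp (α * x) * f - (α ^ 2 / 2) * Real.exp (α * x) * a
      ≤ -Real.sqrt (2 * c) * Real.exp (-Real.sqrt (2 * c) * R) * cHat := by
  have hαsq : α ^ 2 = 2 * c := by
    rw [hα, Real.sq_sqrt (by linarith)]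
  have hαpos : 0 < α := by
    rw [hα]; exact Real.sqrt_pos.mpr (by linarith)
  have hxge : -R ≤ x := (abs_le.mp hx).1
  have hexp : Real.exp (α * (-R)) ≤ Real.exp (α * x) :=
    Real.exp_le_exp.mpr (by nlinarith)
  have hα1 : α ≤ 1 := by nlinarith
  have hcα : c ≤ α / 2 := by nlinarith
  have haf' : cHat ≤ α / 2 * a + f := by nlinarith
  have key : -α * Real.exp (α * x) * f - (α ^ 2 / 2) * Real.exp (α * x) * a
      = -α * Real.exp (α * x) * (α / 2 * a + f) := by
    ring
  rw [key, hα] at *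
  have h1 : Real.sqrt (2 * c) * Real.exp (Real.sqrt (2 * c) * x) * cHat
      ≤ Real.sqrt (2 * c) * Real.exp (Real.sqrt (2 * c) * x) * (Real.sqrt (2*c) / 2 * a + f) := by
    apply mul_le_mul_of_nonneg_left haf' (by positivity)
  have h2 : Real.sqrt (2 * c) * Real.exp (Real.sqrt (2 * c) * (-R)) * cHat
      ≤ Real.sqrt (2 * c) * Real.exp (Real.sqrt (2 * c) * x) * cHat := by
    apply mul_le_mul_of_nonneg_right (mul_le_mul_of_nonneg_left hexp hαpos.le) hcHat.le
  have hR' : -Real.sqrt (2 * c) * R = Real.sqrt (2 * c) * (-R) := by ring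
  rw [hR']
  linarith
end

section
/- Let n, m be positive natural numbers, let M be an n×n real symmetric positive definite matrix, let D be an n×n real matrix and C an n×m real matrix such that D·M⁻¹ + M⁻¹·Dᵀ + C·Cᵀ = 0, and let γ ≥ 0 be real. Then for every x ∈ ℝⁿ, (1/2)·xᵀ(M⁻¹Dᵀ + DM⁻¹)x − γ·xᵀM⁻¹x + (1/2)·trace(M⁻¹·C·Cᵀ) ≤ −(λ₁/2 + γ/λ_max(M))·|x|² + (1/(2·λ_min(M)))·trace(C·Cᵀ), where λ₁ denotes the smallest eigenvalue of the symmetric positive semidefinite matrix C·Cᵀ, λ_max(M) and λ_min(M) denote the largest and smallest eigenvalues of M, and |x| is the Euclidean norm. -/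
/-!
The Lyapunov identity turns the drift form into `-xᵀ C Cᵀ x`, after which each term is controlled
by a Loewner-order sandwich read off from the spectrum: `λ₁ • 1 ≤ C Cᵀ` and
`λ_max(M)⁻¹ • 1 ≤ M⁻¹ ≤ λ_min(M)⁻¹ • 1`. The trace term uses the last bound through
`tr (M⁻¹ C Cᵀ) = tr (Cᵀ M⁻¹ C)`, which is monotone in `M⁻¹` since `Cᵀ (B - A) C` is positive
semidefinite when `A ≤ B`.
-/

open Matrix
open scoped MatrixOrder ComplexOrder

namespace Matrix

variable {n : Type*} [Fintype n]

section Loewner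

variable {𝕜 : Type*} [RCLike 𝕜]

lemma dotProduct_mulVec_le_of_le {A B : Matrix n n 𝕜} (h : A ≤ B) (x : n → 𝕜) :
    star x ⬝ᵥ (A *ᵥ x) ≤ star x ⬝ᵥ (B *ᵥ x) := by
  have := (le_iff.mp h).dotProduct_mulVec_nonneg x
  rwa [sub_mulVec, dotProduct_sub, sub_nonneg] at this

lemma trace_mul_mul_conjTranspose_le_of_le {m : Type*} [Fintype m] {A B : Matrix n n 𝕜}
    (h : A ≤ B) (C : Matrix n m 𝕜) : (A * C * Cᴴ).trace ≤ (B * C * Cᴴ).trace := by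
  have := ((le_iff.mp h).conjTranspose_mul_mul_same C).trace_nonneg
  rw [trace_mul_cycle, trace_mul_comm, sub_mul, trace_sub, sub_nonneg] at this
  simpa only [Matrix.mul_assoc] using this

end Loewner

variable [DecidableEq n]

lemma spectrum_nonsing_inv {K : Type*} [Field K] {A : Matrix n n K} (hA : IsUnit A.det) :
    spectrum K A⁻¹ = (spectrum K A)⁻¹ :=
  (spectrum.map_inv (nonsingInvUnit A hA)).symm

variable {A : Matrix n n ℝ}

lemma IsHermitian.sInf_spectrum_smul_one_le (hA : A.IsHermitian) :
    sInf (spectrum ℝ A) • (1 : Matrix n n ℝ) ≤ A := by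
  rw [← Algebra.algebraMap_eq_smul_one, algebraMap_le_iff_le_spectrum hA.isSelfAdjoint]
  exact fun μ hμ ↦ csInf_le A.finite_real_spectrum.bddBelow hμ

lemma PosDef.inv_mem_spectrum_of_mem_spectrum_inv (hA : A.PosDef) {μ : ℝ}
    (hμ : μ ∈ spectrum ℝ A⁻¹) : μ⁻¹ ∈ spectrum ℝ A := by
  rwa [spectrum_nonsing_inv (A.isUnit_iff_isUnit_det.mp hA.isUnit), Set.mem_inv] at hμ

lemma PosDef.nonsing_inv_le_inv_sInf_spectrum_smul_one (hA : A.PosDef) :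
    A⁻¹ ≤ (sInf (spectrum ℝ A))⁻¹ • (1 : Matrix n n ℝ) := by
  rw [← Algebra.algebraMap_eq_smul_one,
    le_algebraMap_iff_spectrum_le hA.inv.isHermitian.isSelfAdjoint]
  intro μ hμ
  have hμA := hA.inv_mem_spectrum_of_mem_spectrum_inv hμ
  have hInf : 0 < sInf (spectrum ℝ A) :=
    hA.isStrictlyPositive.spectrum_pos (Set.Nonempty.csInf_mem ⟨_, hμA⟩ A.finite_real_spectrum)
  simpa using inv_anti₀ hInf (csInf_le A.finite_real_spectrum.bddBelow hμA)

lemma PosDef.inv_sSup_spectrum_smul_one_le_nonsing_inv (hA : A.PosDef) :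
    (sSup (spectrum ℝ A))⁻¹ • (1 : Matrix n n ℝ) ≤ A⁻¹ := by
  rw [← Algebra.algebraMap_eq_smul_one,
    algebraMap_le_iff_le_spectrum hA.inv.isHermitian.isSelfAdjoint]
  intro μ hμ
  have hμA := hA.inv_mem_spectrum_of_mem_spectrum_inv hμ
  simpa using inv_anti₀ (hA.isStrictlyPositive.spectrum_pos hμA)
    (le_csSup A.finite_real_spectrum.bddAbove hμA)

end Matrix

theorem closed_loop_generator_estimate_general (n m : ℕ)
    (M D : Matrix (Fin n) (Fin n) ℝ) (C : Matrix (Fin n) (Fin m) ℝ)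
    (hMpd : M.PosDef)
    (hLyap : D * M⁻¹ + M⁻¹ * Dᵀ + C * Cᵀ = 0)
    (γ : ℝ) (hγ : 0 ≤ γ)
    (lam1 lamMax lamMin : ℝ)
    (hlam1 : lam1 = sInf (spectrum ℝ (C * Cᵀ)))
    (hlamMax : lamMax = sSup (spectrum ℝ M))
    (hlamMin : lamMin = sInf (spectrum ℝ M))
    (x : Fin n → ℝ) :
    (1 / 2) * (x ⬝ᵥ ((M⁻¹ * Dᵀ + D * M⁻¹) *ᵥ x)) - γ * (x ⬝ᵥ (M⁻¹ *ᵥ x))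
        + (1 / 2) * (M⁻¹ * C * Cᵀ).trace
      ≤ -(lam1 / 2 + γ / lamMax) * (∑ i, x i ^ 2)
        + (1 / (2 * lamMin)) * (C * Cᵀ).trace := by
  have hdrift : M⁻¹ * Dᵀ + D * M⁻¹ = -(C * Cᵀ) := by
    rw [add_comm]
    exact eq_neg_of_add_eq_zero_left hLyap
  have hCCt : lam1 * (x ⬝ᵥ x) ≤ x ⬝ᵥ ((C * Cᵀ) *ᵥ x) := by
    simpa [hlam1, smul_mulVec] using dotProduct_mulVec_le_of_le
      (posSemidef_self_mul_conjTranspose C).isHermitian.sInf_spectrum_smul_one_le x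
  have hMinv : lamMax⁻¹ * (x ⬝ᵥ x) ≤ x ⬝ᵥ (M⁻¹ *ᵥ x) := by
    simpa [hlamMax, smul_mulVec] using
      dotProduct_mulVec_le_of_le hMpd.inv_sSup_spectrum_smul_one_le_nonsing_inv x
  have htrace : (M⁻¹ * C * Cᵀ).trace ≤ lamMin⁻¹ * (C * Cᵀ).trace := by
    simpa [hlamMin] using
      trace_mul_mul_conjTranspose_le_of_le hMpd.nonsing_inv_le_inv_sInf_spectrum_smul_one C
  have hnorm : x ⬝ᵥ x = ∑ i, x i ^ 2 := by simp only [dotProduct, sq]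
  rw [hdrift, neg_mulVec, dotProduct_neg, ← hnorm]
  linear_combination (1 / 2) * hCCt + mul_le_mul_of_nonneg_left hMinv hγ + (1 / 2) * htrace

theorem closed_loop_generator_estimate (n m : ℕ) (hn : 0 < n) (hm : 0 < m)
    (M D : Matrix (Fin n) (Fin n) ℝ) (C : Matrix (Fin n) (Fin m) ℝ)
    (hMsymm : M.IsSymm) (hMpd : M.PosDef)
    (hLyap : D * M⁻¹ + M⁻¹ * Dᵀ + C * Cᵀ = 0)
    (γ : ℝ) (hγ : 0 ≤ γ)
    (lam1 lamMax lamMin : ℝ)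
    (hlam1 : lam1 = sInf (spectrum ℝ (C * Cᵀ)))
    (hlamMax : lamMax = sSup (spectrum ℝ M))
    (hlamMin : lamMin = sInf (spectrum ℝ M))
    (x : Fin n → ℝ) :
    (1 / 2) * (x ⬝ᵥ ((M⁻¹ * Dᵀ + D * M⁻¹) *ᵥ x)) - γ * (x ⬝ᵥ (M⁻¹ *ᵥ x))
        + (1 / 2) * (M⁻¹ * C * Cᵀ).trace
      ≤ -(lam1 / 2 + γ / lamMax) * (∑ i, x i ^ 2)
        + (1 / (2 * lamMin)) * (C * Cᵀ).trace :=
  closed_loop_generator_estimate_general n m M D C hMpd hLyap γ hγ lam1 lamMax lamMin hlam1 hlamMax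
    hlamMin x
end
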